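/- Let N ≥ 3 and k = (k_0,…,k_{r-1}) positive integers summing to N, with the operator P = (1/N)Σ_ℓ P_ℓ on L²(μ_{N,k}) as above. Then the spectrum of P is {0, 1/(N−1), 1}. The eigenspace for eigenvalue 1/(N−1) has dimension (N−1)(r−1), and for any basis {g_1,…,g_{r-1}} of K_{N,k} = {g : Σ_m k_m g(m) = 0}, the functions f_{m,ℓ}(x) = g_m(x_ℓ) for 1 ≤ m ≤ r−1, 1 ≤ ℓ ≤ N−1 form a basis of this eigenspace. -/

import Mathlib

open scoped Classical BigOperators

/-- The multislice: tuples `x : Fin N → Fin r` in which each value `m` is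
attained exactly `k m` times. -/
def multislice (N r : ℕ) (k : Fin r → ℕ) : Finset (Fin N → Fin r) :=
  Finset.univ.filter fun x => ∀ m : Fin r,
    (Finset.univ.filter fun ℓ => x ℓ = m).card = k m

/-- `P_ℓ`: conditional expectation given the coordinate `x ℓ`. -/
noncomputable def Pl (N r : ℕ) (k : Fin r → ℕ) (ℓ : Fin N)
    (f : (Fin N → Fin r) → ℝ) (x : Fin N → Fin r) : ℝ :=
  (∑ y ∈ (multislice N r k).filter (fun y => y ℓ = x ℓ), f y)
    / (((multislice N r k).filter (fun y => y ℓ = x ℓ)).card : ℝ)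

/-- `P = (1/N) ∑ ℓ, P_ℓ`. -/
noncomputable def Pop (N r : ℕ) (k : Fin r → ℕ)
    (f : (Fin N → Fin r) → ℝ) (x : Fin N → Fin r) : ℝ :=
  (1 / (N : ℝ)) * ∑ ℓ, Pl N r k ℓ f x

/-!
`P f (x) = (1/N) ∑ ℓ, (P_ℓ f)(x ℓ)` is a sum of functions of single coordinates, so an
eigenfunction with nonzero eigenvalue is `C + ∑ ℓ, u ℓ (x ℓ)` with every `u ℓ` in `K_{N,k}`.
For `u ∈ K_{N,k}` and `j ≠ i`, the coordinates `≠ i` are exchangeable on the slice `x i = c`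
and `∑ ℓ, u (x ℓ) = 0` on the multislice, so `P_i (u (x j)) = -u (x i)/(N-1)`; hence
`P (C + ∑ ℓ, u ℓ (x ℓ)) = C + (∑ ℓ, u ℓ (x ℓ))/(N-1)`, which yields the spectrum. The same
identity `∑ ℓ, u (x ℓ) = 0` makes the last coordinate redundant in the eigenspace. Conversely, if
`∑ ℓ, u ℓ (x ℓ)` vanishes on the multislice, comparing `x` with `x ∘ swap i j` shows that
`v = u i - u j` satisfies `v (x i) = v (x j)`; applying `P_i` gives `v = -v/(N-1)`, so all `u ℓ`
coincide, which gives linear independence.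
-/

open Finset

theorem Fin.sum_univ_eq_sum_castLE_add {M : Type*} [AddCommMonoid M] {N : ℕ} (hN : 0 < N)
    (F : Fin N → M) :
    ∑ i, F i = ∑ ℓ : Fin (N - 1), F (Fin.castLE (Nat.sub_le N 1) ℓ) + F ⟨N - 1, by omega⟩ := by
  obtain ⟨n, rfl⟩ : ∃ n, N = n + 1 := ⟨N - 1, by omega⟩
  exact Fin.sum_univ_castSucc F

section

variable {N r : ℕ} {k : Fin r → ℕ}

theorem mem_multislice {x : Fin N → Fin r} :
    x ∈ multislice N r k ↔ ∀ m, (univ.filter fun ℓ => x ℓ = m).card = k m := by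
  simp [multislice]

theorem comp_perm_mem_multislice {x : Fin N → Fin r} (hx : x ∈ multislice N r k)
    (σ : Equiv.Perm (Fin N)) : x ∘ σ ∈ multislice N r k := by
  rw [mem_multislice] at hx ⊢
  intro m
  rw [← hx m]
  exact Finset.card_equiv σ (by simp)

theorem multislice_nonempty (hk : ∑ m, k m = N) : (multislice N r k).Nonempty := by
  let e : (Σ m, Fin (k m)) ≃ Fin N := Fintype.equivFinOfCardEq (by simp [hk])
  refine ⟨fun ℓ => (e.symm ℓ).1, mem_multislice.2 fun m => ?_⟩
  calc (univ.filter fun ℓ => (e.symm ℓ).1 = m).card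
      = (univ.filter fun s : Σ m, Fin (k m) => s.1 = m).card :=
        Finset.card_equiv e.symm (by simp)
    _ = k m := by
        rw [← Fintype.card_subtype, Fintype.card_congr (Equiv.sigmaSubtype m), Fintype.card_fin]

theorem sum_comp_of_mem_multislice {x : Fin N → Fin r} (hx : x ∈ multislice N r k)
    (u : Fin r → ℝ) : ∑ i, u (x i) = ∑ m, (k m : ℝ) * u m := by
  rw [← Finset.sum_fiberwise univ x (fun i => u (x i))]
  refine sum_congr rfl fun m _ => ?_
  rw [sum_congr rfl fun i hi => by rw [(mem_filter.1 hi).2], sum_const,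
    mem_multislice.1 hx m, nsmul_eq_mul]

theorem exists_mem_multislice_apply_eq (hk : ∑ m, k m = N) {a : Fin r} (ha : k a ≠ 0)
    (i : Fin N) : ∃ x ∈ multislice N r k, x i = a := by
  obtain ⟨x, hx⟩ := multislice_nonempty hk
  obtain ⟨j, hj⟩ : (univ.filter fun j => x j = a).Nonempty := by
    rw [← card_pos, mem_multislice.1 hx a]
    exact Nat.pos_of_ne_zero ha
  refine ⟨x ∘ Equiv.swap i j, comp_perm_mem_multislice hx _, ?_⟩
  simpa using hj

section Pl

variable {i : Fin N} {x : Fin N → Fin r}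

theorem Pl_congr {f f' : (Fin N → Fin r) → ℝ} (h : ∀ y ∈ multislice N r k, f y = f' y) :
    Pl N r k i f x = Pl N r k i f' x := by
  unfold Pl
  rw [sum_congr rfl fun y hy => h y (mem_filter.1 hy).1]

theorem Pl_add (f f' : (Fin N → Fin r) → ℝ) :
    Pl N r k i (fun y => f y + f' y) x = Pl N r k i f x + Pl N r k i f' x := by
  simp only [Pl, sum_add_distrib, add_div]

theorem Pl_sum {ι : Type*} (s : Finset ι) (F : ι → (Fin N → Fin r) → ℝ) :
    Pl N r k i (fun y => ∑ j ∈ s, F j y) x = ∑ j ∈ s, Pl N r k i (F j) x := by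
  simp only [Pl, sum_div]
  rw [sum_comm]

theorem card_slice_ne_zero (hx : x ∈ multislice N r k) :
    (((multislice N r k).filter fun y => y i = x i).card : ℝ) ≠ 0 :=
  Nat.cast_ne_zero.2 (card_ne_zero_of_mem (mem_filter.2 ⟨hx, rfl⟩))

theorem Pl_const (hx : x ∈ multislice N r k) (c : ℝ) : Pl N r k i (fun _ => c) x = c := by
  rw [Pl, sum_const, nsmul_eq_mul, mul_div_cancel_left₀ _ (card_slice_ne_zero hx)]

theorem Pl_coord_self (hx : x ∈ multislice N r k) (u : Fin r → ℝ) :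
    Pl N r k i (fun y => u (y i)) x = u (x i) := by
  rw [Pl, sum_congr rfl fun y hy => by rw [(mem_filter.1 hy).2], sum_const, nsmul_eq_mul,
    mul_div_cancel_left₀ _ (card_slice_ne_zero hx)]

theorem sum_slice_coord_eq {j ℓ : Fin N} (hj : j ≠ i) (hℓ : ℓ ≠ i) (u : Fin r → ℝ)
    (c : Fin r) :
    ∑ y ∈ (multislice N r k).filter (fun y => y i = c), u (y ℓ)
      = ∑ y ∈ (multislice N r k).filter (fun y => y i = c), u (y j) := by
  have hi : Equiv.swap j ℓ i = i := Equiv.swap_apply_of_ne_of_ne hj.symm hℓ.symm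
  have hmem : ∀ y ∈ (multislice N r k).filter (fun y => y i = c),
      y ∘ Equiv.swap j ℓ ∈ (multislice N r k).filter (fun y => y i = c) := by
    intro y hy
    rw [mem_filter] at hy ⊢
    exact ⟨comp_perm_mem_multislice hy.1 _, by simpa [hi] using hy.2⟩
  refine sum_nbij' (· ∘ Equiv.swap j ℓ) (· ∘ Equiv.swap j ℓ) hmem hmem
    (fun y _ => by ext; simp) (fun y _ => by ext; simp) (fun y _ => by simp)

theorem Pl_coord_of_ne (hx : x ∈ multislice N r k) {j : Fin N} (hji : j ≠ i)
    (u : Fin r → ℝ) :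
    Pl N r k i (fun y => u (y j)) x = ((∑ m, (k m : ℝ) * u m) - u (x i)) / (N - 1) := by
  set S := (multislice N r k).filter fun y => y i = x i
  have hN : (N : ℝ) - 1 ≠ 0 := by
    have : 2 ≤ N := by have := Fin.val_ne_of_ne hji; omega
    have : (2 : ℝ) ≤ N := by exact_mod_cast this
    linarith
  have hcard : (((univ : Finset (Fin N)).erase i).card : ℝ) = N - 1 := by
    rw [card_erase_of_mem (mem_univ i), card_univ, Fintype.card_fin,
      Nat.cast_sub (Fin.pos i), Nat.cast_one]
  have key : (N - 1) * ∑ y ∈ S, u (y j) = S.card * ((∑ m, (k m : ℝ) * u m) - u (x i)) :=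
    calc (N - 1) * ∑ y ∈ S, u (y j)
        = ∑ ℓ ∈ univ.erase i, ∑ y ∈ S, u (y ℓ) := by
          rw [← hcard, ← nsmul_eq_mul, ← sum_const]
          exact sum_congr rfl fun ℓ hℓ => (sum_slice_coord_eq hji (ne_of_mem_erase hℓ) u _).symm
      _ = ∑ y ∈ S, ((∑ m, (k m : ℝ) * u m) - u (x i)) := by
          rw [sum_comm]
          refine sum_congr rfl fun y hy => ?_
          rw [sum_erase_eq_sub (mem_univ i), sum_comp_of_mem_multislice (mem_filter.1 hy).1,
            (mem_filter.1 hy).2]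
      _ = S.card * ((∑ m, (k m : ℝ) * u m) - u (x i)) := by rw [sum_const, nsmul_eq_mul]
  rw [Pl, eq_div_iff hN, div_mul_eq_mul_div, div_eq_iff (card_slice_ne_zero hx), mul_comm, key,
    mul_comm]

end Pl

section Pop

variable {x : Fin N → Fin r}

theorem Pop_congr {f f' : (Fin N → Fin r) → ℝ} (h : ∀ y ∈ multislice N r k, f y = f' y) :
    Pop N r k f x = Pop N r k f' x := by
  simp only [Pop, Pl_congr h]

theorem Pop_add (f f' : (Fin N → Fin r) → ℝ) :
    Pop N r k (fun y => f y + f' y) x = Pop N r k f x + Pop N r k f' x := by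
  simp only [Pop, Pl_add, sum_add_distrib, mul_add]

theorem Pop_sum {ι : Type*} (s : Finset ι) (F : ι → (Fin N → Fin r) → ℝ) :
    Pop N r k (fun y => ∑ j ∈ s, F j y) x = ∑ j ∈ s, Pop N r k (F j) x := by
  simp only [Pop, Pl_sum, mul_sum]
  rw [sum_comm]

theorem Pop_const (hN : N ≠ 0) (hx : x ∈ multislice N r k) (c : ℝ) :
    Pop N r k (fun _ => c) x = c := by
  simp only [Pop, Pl_const hx, sum_const, card_univ, Fintype.card_fin, nsmul_eq_mul]
  field_simp

theorem Pop_coord (hN : 2 ≤ N) (hx : x ∈ multislice N r k) {u : Fin r → ℝ}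
    (hu : ∑ m, (k m : ℝ) * u m = 0) (j : Fin N) :
    Pop N r k (fun y => u (y j)) x = u (x j) / (N - 1) := by
  have hN1 : (N : ℝ) - 1 ≠ 0 := by
    have : (2 : ℝ) ≤ N := by exact_mod_cast hN
    linarith
  have hothers : ∑ i ∈ univ.erase j, Pl N r k i (fun y => u (y j)) x = u (x j) / (N - 1) := by
    rw [sum_congr rfl fun i hi => Pl_coord_of_ne hx (ne_of_mem_erase hi).symm u, hu, ← sum_div,
      sum_sub_distrib, sum_const_zero, sum_erase_eq_sub (mem_univ j),
      sum_comp_of_mem_multislice hx, hu]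
    ring
  rw [Pop, ← add_sum_erase _ _ (mem_univ j), Pl_coord_self hx, hothers]
  field_simp
  ring

theorem Pop_const_add_sum_coord (hN : 2 ≤ N) (hx : x ∈ multislice N r k) (C : ℝ)
    {u : Fin N → Fin r → ℝ} (hu : ∀ ℓ, ∑ m, (k m : ℝ) * u ℓ m = 0) :
    Pop N r k (fun y => C + ∑ ℓ, u ℓ (y ℓ)) x = C + (∑ ℓ, u ℓ (x ℓ)) / (N - 1) := by
  rw [Pop_add, Pop_const (by omega) hx, Pop_sum, sum_div]
  simp only [Pop_coord hN hx (hu _)]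

end Pop

-- `K_{N,k}` in the paper.
def centeredSubspace (k : Fin r → ℕ) : Submodule ℝ (Fin r → ℝ) :=
  LinearMap.ker (∑ m, (k m : ℝ) • (LinearMap.proj m : (Fin r → ℝ) →ₗ[ℝ] ℝ))

theorem mem_centeredSubspace {u : Fin r → ℝ} :
    u ∈ centeredSubspace k ↔ ∑ m, (k m : ℝ) * u m = 0 := by
  simp [centeredSubspace]

theorem finrank_centeredSubspace (hk0 : ∑ m, k m ≠ 0) :
    Module.finrank ℝ (centeredSubspace k) = r - 1 := by
  have hφ : (∑ m, (k m : ℝ) • LinearMap.proj m : Module.Dual ℝ (Fin r → ℝ)) ≠ 0 := by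
    intro h
    have : ∑ m, (k m : ℝ) = 0 := by simpa using LinearMap.congr_fun h 1
    exact hk0 (by exact_mod_cast this)
  have := Module.Dual.finrank_ker_add_one_of_ne_zero hφ
  rw [Module.finrank_fin_fun] at this
  exact Nat.eq_sub_of_add_eq this

theorem span_eq_centeredSubspace (hk0 : ∑ m, k m ≠ 0) {ι : Type*} [Fintype ι]
    (hcard : Fintype.card ι = r - 1) {g : ι → Fin r → ℝ} (hg : ∀ i, g i ∈ centeredSubspace k)
    (hgli : LinearIndependent ℝ g) : Submodule.span ℝ (Set.range g) = centeredSubspace k :=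
  Submodule.eq_of_le_of_finrank_eq (Submodule.span_le.2 (Set.range_subset_iff.2 hg))
    (by rw [finrank_span_eq_card hgli, hcard, finrank_centeredSubspace hk0])

theorem exists_const_add_sum_centered (hk0 : ∑ m, k m ≠ 0) (H : Fin N → Fin r → ℝ) :
    ∃ (C : ℝ) (u : Fin N → Fin r → ℝ), (∀ ℓ, u ℓ ∈ centeredSubspace k) ∧
      ∀ x : Fin N → Fin r, ∑ ℓ, H ℓ (x ℓ) = C + ∑ ℓ, u ℓ (x ℓ) := by
  have hk0' : (∑ m, (k m : ℝ)) ≠ 0 := by exact_mod_cast hk0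
  set c : Fin N → ℝ := fun ℓ => (∑ m, (k m : ℝ) * H ℓ m) / ∑ m, (k m : ℝ)
  refine ⟨∑ ℓ, c ℓ, fun ℓ m => H ℓ m - c ℓ, fun ℓ => mem_centeredSubspace.2 ?_, fun x => ?_⟩
  · simp only [mul_sub, sum_sub_distrib, ← sum_mul, c]
    field_simp
    ring
  · rw [sum_sub_distrib]
    ring

theorem exists_sum_coord_of_eigen (hN : N ≠ 0) {μ : ℝ} (hμ : μ ≠ 0) {f : (Fin N → Fin r) → ℝ}
    (hf : ∀ x ∈ multislice N r k, Pop N r k f x = μ * f x) :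
    ∃ H : Fin N → Fin r → ℝ, ∀ x ∈ multislice N r k, f x = ∑ ℓ, H ℓ (x ℓ) := by
  refine ⟨fun ℓ m => Pl N r k ℓ f (fun _ => m) / (μ * N), fun x hx => ?_⟩
  -- `Pl ℓ f x` only depends on `x ℓ`
  change f x = ∑ ℓ, Pl N r k ℓ f x / (μ * N)
  have := hf x hx
  rw [Pop] at this
  rw [← sum_div, eq_div_iff (by positivity)]
  field_simp at this
  linarith

theorem eigenfunction_eq_const_add_sum_centered (hN : N ≠ 0) (hk : ∑ m, k m = N) {μ : ℝ}
    (hμ : μ ≠ 0) {f : (Fin N → Fin r) → ℝ}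
    (hf : ∀ x ∈ multislice N r k, Pop N r k f x = μ * f x) :
    ∃ (C : ℝ) (u : Fin N → Fin r → ℝ), (∀ ℓ, u ℓ ∈ centeredSubspace k) ∧
      ∀ x ∈ multislice N r k, f x = C + ∑ ℓ, u ℓ (x ℓ) := by
  obtain ⟨H, hH⟩ := exists_sum_coord_of_eigen hN hμ hf
  obtain ⟨C, u, hu, hHu⟩ := exists_const_add_sum_centered (hk ▸ hN) H
  exact ⟨C, u, hu, fun x hx => (hH x hx).trans (hHu x)⟩

theorem eigenvalue_trichotomy (hN : 2 ≤ N) (hk : ∑ m, k m = N) {μ : ℝ}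
    {f : (Fin N → Fin r) → ℝ} (hf0 : ∃ x ∈ multislice N r k, f x ≠ 0)
    (hf : ∀ x ∈ multislice N r k, Pop N r k f x = μ * f x) :
    μ = 0 ∨ μ = 1 / (N - 1 : ℝ) ∨ μ = 1 := by
  obtain ⟨x₀, hx₀, hfx₀⟩ := hf0
  rcases eq_or_ne μ 0 with hμ | hμ
  · exact Or.inl hμ
  rcases eq_or_ne μ (1 / (N - 1 : ℝ)) with hμ' | hμ'
  · exact Or.inr (Or.inl hμ')
  obtain ⟨C, u, hu, hfu⟩ :=
    eigenfunction_eq_const_add_sum_centered (by omega) hk hμ hf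
  have hPf : ∀ x ∈ multislice N r k, Pop N r k f x = C + (∑ ℓ, u ℓ (x ℓ)) / (N - 1) :=
    fun x hx => (Pop_congr hfu).trans
      (Pop_const_add_sum_coord hN hx C fun ℓ => mem_centeredSubspace.1 (hu ℓ))
  -- away from `1/(N-1)`, the eigen-equation pins down `∑ ℓ, u ℓ (x ℓ)`, so `f` is constant
  have hconst : ∀ x ∈ multislice N r k, f x = f x₀ := by
    intro x hx
    have h₁ := (hPf x hx).symm.trans (hf x hx)
    have h₀ := (hPf x₀ hx₀).symm.trans (hf x₀ hx₀)
    rw [hfu x hx] at h₁ ⊢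
    rw [hfu x₀ hx₀] at h₀ ⊢
    have : (1 / (N - 1 : ℝ) - μ) * (∑ ℓ, u ℓ (x ℓ) - ∑ ℓ, u ℓ (x₀ ℓ)) = 0 := by
      linear_combination h₁ - h₀
    have := (mul_eq_zero.1 this).resolve_left (sub_ne_zero.2 hμ'.symm)
    linarith
  have := (Pop_congr hconst).symm.trans (hf x₀ hx₀)
  rw [Pop_const (by omega) hx₀] at this
  exact Or.inr (Or.inr (mul_eq_right₀ hfx₀ |>.1 this.symm))

theorem centered_apply_eq_zero_of_coord_eq {v : Fin r → ℝ} (hv : v ∈ centeredSubspace k)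
    {i j : Fin N} (hij : i ≠ j) (h : ∀ y ∈ multislice N r k, v (y i) = v (y j))
    {x : Fin N → Fin r} (hx : x ∈ multislice N r k) : v (x i) = 0 := by
  have hN : (1 : ℝ) < N := by
    have := Fin.val_ne_of_ne hij
    have : 1 < N := by omega
    exact_mod_cast this
  -- apply `P_i` to both sides of `v (y i) = v (y j)`
  have := Pl_congr (i := i) (x := x) h
  rw [Pl_coord_self hx, Pl_coord_of_ne hx hij.symm, mem_centeredSubspace.1 hv,
    eq_div_iff (by linarith)] at this
  nlinarith

theorem coord_eq_of_sum_coord_eq_zero (hk : ∑ m, k m = N) (hpos : ∀ m, 0 < k m)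
    {u : Fin N → Fin r → ℝ} (hu : ∀ ℓ, u ℓ ∈ centeredSubspace k)
    (h : ∀ y ∈ multislice N r k, ∑ ℓ, u ℓ (y ℓ) = 0) (i j : Fin N) : u i = u j := by
  rcases eq_or_ne i j with rfl | hij
  · rfl
  -- comparing `y` with `y ∘ swap i j` leaves only the terms at `i` and `j`
  have hswap : ∀ y ∈ multislice N r k, (u i - u j) (y i) = (u i - u j) (y j) := by
    intro y hy
    have hdiff : ∑ ℓ, (u ℓ (y (Equiv.swap i j ℓ)) - u ℓ (y ℓ)) = 0 := by
      rw [sum_sub_distrib, h y hy, sub_zero]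
      exact h _ (comp_perm_mem_multislice hy _)
    rw [Fintype.sum_eq_add i j hij fun ℓ hℓ => by
      rw [Equiv.swap_apply_of_ne_of_ne hℓ.1 hℓ.2, sub_self]] at hdiff
    simp only [Equiv.swap_apply_left, Equiv.swap_apply_right, Pi.sub_apply] at hdiff ⊢
    linarith
  funext a
  obtain ⟨x, hx, rfl⟩ := exists_mem_multislice_apply_eq hk (hpos a).ne' i
  exact sub_eq_zero.1 (centered_apply_eq_zero_of_coord_eq (sub_mem (hu i) (hu j)) hij hswap hx)

-- The paper's `f_{m,ℓ}`, `ℓ < N - 1`, as functions on the multislice.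
def coordFamily (N r : ℕ) (k : Fin r → ℕ) {ι : Type*} (g : ι → Fin r → ℝ)
    (p : ι × Fin (N - 1)) (x : multislice N r k) : ℝ :=
  g p.1 (x.1 (Fin.castLE (Nat.sub_le N 1) p.2))

theorem linearIndependent_coordFamily (hk : ∑ m, k m = N) (hpos : ∀ m, 0 < k m) {ι : Type*}
    [Fintype ι] {g : ι → Fin r → ℝ} (hg : ∀ i, g i ∈ centeredSubspace k)
    (hgli : LinearIndependent ℝ g) : LinearIndependent ℝ (coordFamily N r k g) := by
  rw [Fintype.linearIndependent_iff]
  rintro c hc ⟨m, ℓ⟩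
  have hN : 0 < N := by have := ℓ.2; omega
  set h : Fin (N - 1) → Fin r → ℝ := fun ℓ => ∑ m, c (m, ℓ) • g m
  set u : Fin N → Fin r → ℝ := fun i => if hi : (i : ℕ) < N - 1 then h ⟨i, hi⟩ else 0
  have hu : ∀ i, u i ∈ centeredSubspace k := fun i => by
    by_cases hi : (i : ℕ) < N - 1
    · simpa [u, hi] using sum_mem fun m _ => Submodule.smul_mem _ (c (m, _)) (hg m)
    · simp [u, hi]
  have hsum : ∀ y ∈ multislice N r k, ∑ i, u i (y i) = 0 := by
    intro y hy
    have := congrFun hc ⟨y, hy⟩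
    simp only [Fintype.sum_prod_type_right, Finset.sum_apply, Pi.smul_apply, smul_eq_mul,
      Pi.zero_apply, coordFamily] at this
    simpa [Fin.sum_univ_eq_sum_castLE_add hN, u, h, Finset.sum_apply] using this
  have hℓ : h ℓ = 0 := by
    simpa [u] using coord_eq_of_sum_coord_eq_zero hk hpos hu hsum
      (Fin.castLE (Nat.sub_le N 1) ℓ) ⟨N - 1, by omega⟩
  exact Fintype.linearIndependent_iff.1 hgli (fun m => c (m, ℓ)) hℓ m

theorem coord_mem_span_coordFamily {ι : Type*} {g : ι → Fin r → ℝ}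
    (hspan : centeredSubspace k ≤ Submodule.span ℝ (Set.range g)) {u : Fin r → ℝ}
    (hu : u ∈ centeredSubspace k) (ℓ : Fin N) :
    (fun x : multislice N r k => u (x.1 ℓ))
      ∈ Submodule.span ℝ (Set.range (coordFamily N r k g)) := by
  have hcast : ∀ ℓ' : Fin (N - 1),
      (fun x : multislice N r k => u (x.1 (Fin.castLE (Nat.sub_le N 1) ℓ')))
        ∈ Submodule.span ℝ (Set.range (coordFamily N r k g)) := by
    intro ℓ'
    refine Submodule.span_mono ?_ (Submodule.apply_mem_span_image_of_mem_span
      (LinearMap.funLeft ℝ ℝ fun x : multislice N r k => x.1 (Fin.castLE (Nat.sub_le N 1) ℓ'))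
      (hspan hu))
    rintro _ ⟨_, ⟨m, rfl⟩, rfl⟩
    exact ⟨(m, ℓ'), rfl⟩
  by_cases hℓ : (ℓ : ℕ) < N - 1
  · exact hcast ⟨ℓ, hℓ⟩
  -- the last coordinate is minus the sum of the others, since `u` is centered
  have hlast : (fun x : multislice N r k => u (x.1 ℓ)) = -∑ ℓ' : Fin (N - 1),
      fun x : multislice N r k => u (x.1 (Fin.castLE (Nat.sub_le N 1) ℓ')) := by
    funext x
    have hℓN := ℓ.2
    have := sum_comp_of_mem_multislice x.2 u
    rw [mem_centeredSubspace.1 hu, Fin.sum_univ_eq_sum_castLE_add (by omega),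
      show (⟨N - 1, _⟩ : Fin N) = ℓ from Fin.ext (show N - 1 = ℓ by omega)] at this
    simp only [Pi.neg_apply, Finset.sum_apply]
    linarith
  rw [hlast]
  exact neg_mem (sum_mem fun ℓ' _ => hcast ℓ')

theorem mem_span_coordFamily_of_eigen (hN : 3 ≤ N) (hk : ∑ m, k m = N) {ι : Type*}
    {g : ι → Fin r → ℝ} (hspan : centeredSubspace k ≤ Submodule.span ℝ (Set.range g))
    {f : (Fin N → Fin r) → ℝ}
    (hf : ∀ x ∈ multislice N r k, Pop N r k f x = (1 / (N - 1 : ℝ)) * f x) :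
    (fun x : multislice N r k => f x) ∈ Submodule.span ℝ (Set.range (coordFamily N r k g)) := by
  have hN' : (3 : ℝ) ≤ N := by exact_mod_cast hN
  have hN1 : (N : ℝ) - 1 ≠ 0 := by linarith
  obtain ⟨C, u, hu, hfu⟩ :=
    eigenfunction_eq_const_add_sum_centered (by omega) hk (one_div_ne_zero hN1) hf
  have hC : C = 0 := by
    obtain ⟨x, hx⟩ := multislice_nonempty hk
    have := (Pop_congr hfu).symm.trans (hf x hx)
    rw [Pop_const_add_sum_coord (by omega) hx C fun ℓ => mem_centeredSubspace.1 (hu ℓ),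
      hfu x hx] at this
    field_simp at this
    nlinarith
  have hsum : (fun x : multislice N r k => f x) = ∑ ℓ, fun x : multislice N r k => u ℓ (x.1 ℓ) := by
    funext x
    simp [hfu x.1 x.2, hC, Finset.sum_apply]
  rw [hsum]
  exact sum_mem fun ℓ _ => coord_mem_span_coordFamily hspan (hu ℓ) ℓ

end

/-- Spectrum and gap eigenspace of `P` for `N ≥ 3`: every eigenvalue is `0`,
`1/(N-1)` or `1`, and for any basis `g` of `K_{N,k}` the `(N-1)(r-1)`
functions `x ↦ g_m (x_ℓ)`, `m < r-1`, `ℓ < N-1`, form a basis (a linearly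
independent spanning family) of the eigenspace for `1/(N-1)`, viewed as
functions on the multislice. -/
theorem Pop_spectrum_and_gap_eigenspace (N r : ℕ) (hN : 3 ≤ N)
    (k : Fin r → ℕ) (hk : ∑ m, k m = N) (hpos : ∀ m, 1 ≤ k m)
    (g : Fin (r - 1) → Fin r → ℝ)
    (hg0 : ∀ i, ∑ m, (k m : ℝ) * g i m = 0)
    (hgli : LinearIndependent ℝ g) :
    (∀ (μ : ℝ) (f : (Fin N → Fin r) → ℝ),
        (∃ x ∈ multislice N r k, f x ≠ 0) →
        (∀ x ∈ multislice N r k, Pop N r k f x = μ * f x) →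
        μ = 0 ∨ μ = 1 / (N - 1 : ℝ) ∨ μ = 1) ∧
    (∀ p : Fin (r - 1) × Fin (N - 1), ∀ x ∈ multislice N r k,
        Pop N r k (fun z => g p.1 (z (Fin.castLE (by omega) p.2))) x
          = (1 / (N - 1 : ℝ)) * g p.1 (x (Fin.castLE (by omega) p.2))) ∧
    LinearIndependent ℝ (fun p : Fin (r - 1) × Fin (N - 1) =>
      fun x : ↥(multislice N r k) =>
        g p.1 ((x : Fin N → Fin r) (Fin.castLE (by omega) p.2))) ∧
    (∀ f : (Fin N → Fin r) → ℝ,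
        (∀ x ∈ multislice N r k, Pop N r k f x = (1 / (N - 1 : ℝ)) * f x) →
        (fun x : ↥(multislice N r k) => f x) ∈
          Submodule.span ℝ (Set.range (fun p : Fin (r - 1) × Fin (N - 1) =>
            fun x : ↥(multislice N r k) =>
              g p.1 ((x : Fin N → Fin r) (Fin.castLE (by omega) p.2))))) := by
  have hg : ∀ i, g i ∈ centeredSubspace k := fun i => mem_centeredSubspace.2 (hg0 i)
  have hspan : Submodule.span ℝ (Set.range g) = centeredSubspace k :=
    span_eq_centeredSubspace (by omega) (Fintype.card_fin _) hg hgli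
  refine ⟨fun μ f hf0 hf => eigenvalue_trichotomy (by omega) hk hf0 hf,
    fun p x hx => ?_, linearIndependent_coordFamily hk hpos hg hgli,
    fun f hf => mem_span_coordFamily_of_eigen hN hk hspan.ge hf⟩
  rw [Pop_coord (by omega) hx (hg0 p.1), one_div_mul_eq_div]
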